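/- If A and B are self-provers in QGL and QGL proves □A → (A ↔ B), then QGL proves A ↔ B. -/
import Mathlib


namespace PML

/-- Formulas of predicate modal logic, with propositional variables (language L''). -/
inductive Fml : Type
  | verum : Fml
  | falsum : Fml
  | pvar (q : ℕ) : Fml
  | pred (P : ℕ) (args : List ℕ) : Fml
  | neg (A : Fml) : Fml
  | imp (A B : Fml) : Fml
  | all (u : ℕ) (A : Fml) : Fml
  | box (A : Fml) : Fml

namespace Fml

def lor (A B : Fml) : Fml := A.neg.imp B
def land (A B : Fml) : Fml := (A.imp B.neg).neg
def iff (A B : Fml) : Fml := (A.imp B).land (B.imp A)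
def ex (u : ℕ) (A : Fml) : Fml := (Fml.all u A.neg).neg
def boxdot (A : Fml) : Fml := A.box.land A

def boxIter : ℕ → Fml → Fml
  | 0, A => A
  | n + 1, A => (boxIter n A).box

/-- Free variables. -/
def free : Fml → Finset ℕ
  | pred _ args => args.toFinset
  | neg A => A.free
  | imp A B => A.free ∪ B.free
  | all u A => A.free.erase u
  | box A => A.free
  | _ => ∅

/-- Bound variables. -/
def bound : Fml → Finset ℕ
  | neg A => A.bound
  | imp A B => A.bound ∪ B.bound
  | all u A => insert u A.bound
  | box A => A.bound
  | _ => ∅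

/-- Propositional variables occurring in a formula. -/
def pvars : Fml → Finset ℕ
  | pvar q => {q}
  | neg A => A.pvars
  | imp A B => A.pvars ∪ B.pvars
  | all _ A => A.pvars
  | box A => A.pvars
  | _ => ∅

/-- Predicate symbols occurring in a formula. -/
def preds : Fml → Finset ℕ
  | pred P _ => {P}
  | neg A => A.preds
  | imp A B => A.preds ∪ B.preds
  | all _ A => A.preds
  | box A => A.preds
  | _ => ∅

/-- Predicate symbols together with the arity they are used with. -/
def predSig : Fml → Finset (ℕ × ℕ)
  | pred P args => {(P, args.length)}
  | neg A => A.predSig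
  | imp A B => A.predSig ∪ B.predSig
  | all _ A => A.predSig
  | box A => A.predSig
  | _ => ∅

/-- Rename free occurrences of the variable `u` to `v`. -/
def rename : Fml → ℕ → ℕ → Fml
  | pred P args, u, v => pred P (args.map fun x => if x = u then v else x)
  | neg A, u, v => (A.rename u v).neg
  | imp A B, u, v => (A.rename u v).imp (B.rename u v)
  | all w A, u, v => if w = u then all w A else all w (A.rename u v)
  | box A, u, v => (A.rename u v).box
  | A, _, _ => A

/-- Substitution of a formula for a propositional variable. -/
def psub : Fml → ℕ → Fml → Fml
  | pvar q, p, B => if q = p then B else pvar q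
  | neg A, p, B => (A.psub p B).neg
  | imp A C, p, B => (A.psub p B).imp (C.psub p B)
  | all u A, p, B => all u (A.psub p B)
  | box A, p, B => (A.psub p B).box
  | A, _, _ => A

/-- Simultaneous substitution of formulas for all propositional variables. -/
def msub : Fml → (ℕ → Fml) → Fml
  | pvar q, σ => σ q
  | neg A, σ => (A.msub σ).neg
  | imp A C, σ => (A.msub σ).imp (C.msub σ)
  | all u A, σ => all u (A.msub σ)
  | box A, σ => (A.msub σ).box
  | A, _ => A

/-- Depth-indexed substitution: occurrences of `p` at modal depth `i` are replaced by `σ i`. -/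
def dsub : Fml → ℕ → (ℕ → Fml) → Fml
  | pvar q, p, σ => if q = p then σ 0 else pvar q
  | neg A, p, σ => (A.dsub p σ).neg
  | imp A C, p, σ => (A.dsub p σ).imp (C.dsub p σ)
  | all u A, p, σ => all u (A.dsub p σ)
  | box A, p, σ => (A.dsub p (fun i => σ (i + 1))).box
  | A, _, _ => A

/-- `A(p)[B_0,…,B_k]` for a list `[B_0,…,B_k]`. -/
def dsubL (A : Fml) (p : ℕ) (L : List Fml) : Fml := A.dsub p (fun i => L.getD i verum)

/-- `A^{⊤(n)}`: replace every boxed subformula at modal depth `n` by `⊤`. -/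
def eraseT : ℕ → Fml → Fml
  | 0, box _ => verum
  | n + 1, box A => (eraseT n A).box
  | n, neg A => (eraseT n A).neg
  | n, imp A B => (eraseT n A).imp (eraseT n B)
  | n, all u A => all u (eraseT n A)
  | _, A => A

/-- `occursAt p A d`: the propositional variable `p` occurs in `A` at modal depth `d`. -/
def occursAt (p : ℕ) : Fml → ℕ → Prop
  | pvar q, d => q = p ∧ d = 0
  | neg A, d => occursAt p A d
  | imp A B, d => occursAt p A d ∨ occursAt p B d
  | all _ A, d => occursAt p A d
  | box A, d => ∃ d', d = d' + 1 ∧ occursAt p A d'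
  | _, _ => False

/-- `A` is modalized in `p`: no occurrence of `p` at depth `0`. -/
def Modalized (p : ℕ) (A : Fml) : Prop := ¬ occursAt p A 0

/-- Conjunction of a list of formulas. -/
def conj : List Fml → Fml
  | [] => verum
  | A :: L => A.land (conj L)

/-- The canonical fixed-point sequence:
`A_0 := A^{⊤(0)}(p)[⊤]`, `A_{k+1} := A^{⊤(k+1)}(p)[⊤, A_k, …, A_0]`. -/
def fpSeq (p : ℕ) (A : Fml) : ℕ → Fml
  | 0 => (eraseT 0 A).dsub p (fun _ => verum)
  | n + 1 => (eraseT (n + 1) A).dsub p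
      (fun i => match i with
        | 0 => verum
        | j + 1 => fpSeq p A (n - j))
  termination_by k => k
  decreasing_by omega

end Fml

open Fml

/-- Axioms of predicate logic, together with the modal distribution axiom K. -/
inductive Ax : Fml → Prop
  | imp1 (A B : Fml) : Ax (A.imp (B.imp A))
  | imp2 (A B C : Fml) : Ax ((A.imp (B.imp C)).imp ((A.imp B).imp (A.imp C)))
  | contra (A B : Fml) : Ax ((A.neg.imp B.neg).imp (B.imp A))
  | verum : Ax Fml.verum
  | exfalso (A : Fml) : Ax (Fml.falsum.imp A)
  | negE (A : Fml) : Ax (A.neg.imp (A.imp Fml.falsum))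
  | negI (A : Fml) : Ax ((A.imp Fml.falsum).imp A.neg)
  | allE (A : Fml) (u v : ℕ) (h : v ∉ A.bound) : Ax ((Fml.all u A).imp (A.rename u v))
  | allK (A B : Fml) (u : ℕ) :
      Ax ((Fml.all u (A.imp B)).imp ((Fml.all u A).imp (Fml.all u B)))
  | allV (A : Fml) (u : ℕ) (h : u ∉ A.free) : Ax (A.imp (Fml.all u A))
  | k (A B : Fml) : Ax (((A.imp B).box).imp (A.box.imp B.box))

/-- Hilbert-style provability from the base axioms plus extra axioms `Ext`,
closed under modus ponens, necessitation and generalization. -/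
inductive Prf (Ext : Fml → Prop) : Fml → Prop
  | ax {A : Fml} : Ax A → Prf Ext A
  | ext {A : Fml} : Ext A → Prf Ext A
  | mp {A B : Fml} : Prf Ext (A.imp B) → Prf Ext A → Prf Ext B
  | nec {A : Fml} : Prf Ext A → Prf Ext A.box
  | gen {A : Fml} (u : ℕ) : Prf Ext A → Prf Ext (Fml.all u A)

/-- The smallest normal predicate modal logic QK. -/
def QK : Fml → Prop := Prf (fun _ => False)

inductive Ax4 : Fml → Prop
  | four (A : Fml) : Ax4 (A.box.imp A.box.box)

/-- QK4 : QK plus the axiom 4. -/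
def QK4 : Fml → Prop := Prf Ax4

inductive AxL : Fml → Prop
  | lob (A : Fml) : AxL (((A.box.imp A).box).imp A.box)

/-- QGL : QK plus Löb's axiom. -/
def QGL : Fml → Prop := Prf AxL

/-- NQGL : QK4 plus the infinitary rule BL. -/
inductive NQGL : Fml → Prop
  | ax {A : Fml} : Ax A → NQGL A
  | four (A : Fml) : NQGL (A.box.imp A.box.box)
  | mp {A B : Fml} : NQGL (A.imp B) → NQGL A → NQGL B
  | nec {A : Fml} : NQGL A → NQGL A.box
  | gen {A : Fml} (u : ℕ) : NQGL A → NQGL (Fml.all u A)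
  | bl {A : Fml} : (∀ n : ℕ, NQGL ((boxIter (n + 1) Fml.falsum).imp A)) → NQGL A

/-- Σ-formulas. -/
inductive IsSigma : Fml → Prop
  | box (A : Fml) : IsSigma A.box
  | lor {A B : Fml} : IsSigma A → IsSigma B → IsSigma (A.lor B)
  | land {A B : Fml} : IsSigma A → IsSigma B → IsSigma (A.land B)
  | ex {A : Fml} (u : ℕ) : IsSigma A → IsSigma (Fml.ex u A)

/- ## Kripke semantics -/

structure KFrame where
  W : Type
  R : W → W → Prop
  Dom : Type
  D : W → Set Dom
  Dne : ∀ w, (D w).Nonempty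
  mono : ∀ {w w'}, R w w' → D w ⊆ D w'

structure KModel extends KFrame where
  I : W → ℕ → List Dom → Prop
  V : W → ℕ → Prop

def Sat (M : KModel) : Fml → M.W → (ℕ → M.Dom) → Prop
  | .verum, _, _ => True
  | .falsum, _, _ => False
  | .pvar q, w, _ => M.V w q
  | .pred P args, w, ρ => M.I w P (args.map ρ)
  | .neg A, w, ρ => ¬ Sat M A w ρ
  | .imp A B, w, ρ => Sat M A w ρ → Sat M B w ρ
  | .all u A, w, ρ => ∀ a ∈ M.D w, Sat M A w (Function.update ρ u a)
  | .box A, w, ρ => ∀ v, M.R w v → Sat M A v ρ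

/-- Validity in a model. -/
def MVal (M : KModel) (A : Fml) : Prop :=
  ∀ (w : M.W) (ρ : ℕ → M.Dom), (∀ x, ρ x ∈ M.D w) → Sat M A w ρ

/-- Validity on a frame. -/
def FVal (F : KFrame) (A : Fml) : Prop :=
  ∀ (I : F.W → ℕ → List F.Dom → Prop) (V : F.W → ℕ → Prop),
    MVal { toKFrame := F, I := I, V := V } A

/-- Smoryński's model. -/
def MS : KModel where
  W := ℕ
  R := fun m n => n < m
  Dom := ℕ
  D := fun n => {m | n ≤ m}
  Dne := fun n => ⟨n, le_refl n⟩
  mono := by intro w w' h x hx; simp only [Set.mem_setOf_eq] at *; omega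
  I := fun w P L => P = 0 ∧ ∀ m ∈ L, m ≠ w + 1
  V := fun _ _ => False

/-- The finite truncations of Smoryński's model. -/
def Mk (k : ℕ) : KModel where
  W := Fin (k + 1)
  R := fun m n => (n : ℕ) < (m : ℕ)
  Dom := ℕ
  D := fun n => {m | (n : ℕ) ≤ m ∧ m ≤ k + 2}
  Dne := fun n => ⟨(n : ℕ), by simp only [Set.mem_setOf_eq]; have := n.isLt; omega⟩
  mono := by intro w w' h x hx; simp only [Set.mem_setOf_eq] at *; omega
  I := fun w P L => P = 0 ∧ ∀ m ∈ L, m ≠ (w : ℕ) + 1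
  V := fun _ _ => False

/-- `A` contains only the unary predicate symbol `P` (coded `0`) and no propositional variables. -/
def OnlyP (A : Fml) : Prop := A.predSig ⊆ {(0, 1)} ∧ A.pvars = ∅

/-- The atomic formula `P(u)`. -/
def Pat (u : ℕ) : Fml := Fml.pred 0 [u]

/-- `h(F) ≤ n`: there is no chain of `n+1` successive `R`-steps. -/
def HeightLe (F : KFrame) (n : ℕ) : Prop :=
  ∀ c : ℕ → F.W, ¬ ∀ i < n + 1, F.R (c i) (c (i + 1))

section PrfLemmas

variable {Ext : Fml → Prop}

open Fml

theorem Prf.imp1' (A B : Fml) : Prf Ext (A.imp (B.imp A)) := Prf.ax (Ax.imp1 A B)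

theorem Prf.imp2' (A B C : Fml) :
    Prf Ext ((A.imp (B.imp C)).imp ((A.imp B).imp (A.imp C))) := Prf.ax (Ax.imp2 A B C)

theorem Prf.pid (A : Fml) : Prf Ext (A.imp A) :=
  Prf.mp (Prf.mp (Prf.imp2' A (A.imp A) A) (Prf.imp1' A (A.imp A))) (Prf.imp1' A A)

theorem Prf.lift {A : Fml} (B : Fml) (h : Prf Ext A) : Prf Ext (B.imp A) :=
  Prf.mp (Prf.imp1' A B) h

theorem Prf.mp2 {A B C : Fml} (h1 : Prf Ext (A.imp (B.imp C))) (h2 : Prf Ext (A.imp B)) :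
    Prf Ext (A.imp C) :=
  Prf.mp (Prf.mp (Prf.imp2' A B C) h1) h2

theorem Prf.trans {A B C : Fml} (h1 : Prf Ext (A.imp B)) (h2 : Prf Ext (B.imp C)) :
    Prf Ext (A.imp C) :=
  Prf.mp2 (Prf.lift A h2) h1

/-- `compR`: from `⊢ P → Q` get `⊢ (X→P) → (X→Q)`. -/
theorem Prf.compR {P Q : Fml} (X : Fml) (h : Prf Ext (P.imp Q)) :
    Prf Ext ((X.imp P).imp (X.imp Q)) :=
  Prf.mp (Prf.imp2' X P Q) (Prf.lift X h)

/-- transitivity under a context. -/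
theorem Prf.transC {T P Q R : Fml} (h1 : Prf Ext (T.imp (P.imp Q)))
    (h2 : Prf Ext (T.imp (Q.imp R))) : Prf Ext (T.imp (P.imp R)) :=
  Prf.mp2 (Prf.mp2 (Prf.lift T (Prf.imp2' P Q R)) (Prf.trans h2 (Prf.imp1' (Q.imp R) P))) h1

/-- object-level swap (C combinator). -/
theorem Prf.swapO (P Q R : Fml) :
    Prf Ext ((P.imp (Q.imp R)).imp (Q.imp (P.imp R))) :=
  Prf.transC (Prf.lift _ (Prf.imp1' Q P)) (Prf.imp2' P Q R)

theorem Prf.swap {P Q R : Fml} (h : Prf Ext (P.imp (Q.imp R))) :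
    Prf Ext (Q.imp (P.imp R)) :=
  Prf.mp (Prf.swapO P Q R) h

theorem Prf.contract {P Q : Fml} (h : Prf Ext (P.imp (P.imp Q))) : Prf Ext (P.imp Q) :=
  Prf.mp2 h (Prf.pid P)

theorem Prf.dni (A : Fml) : Prf Ext (A.imp A.neg.neg) :=
  Prf.trans (Prf.swap (Prf.ax (Ax.negE A))) (Prf.ax (Ax.negI A.neg))

theorem Prf.landE1 (X Y : Fml) : Prf Ext ((X.land Y).imp X) :=
  Prf.mp (Prf.ax (Ax.contra X (X.land Y)))
    (Prf.trans (Prf.trans (Prf.ax (Ax.negE X)) (Prf.compR X (Prf.ax (Ax.exfalso Y.neg))))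
      (Prf.dni (X.imp Y.neg)))

theorem Prf.landE2 (X Y : Fml) : Prf Ext ((X.land Y).imp Y) :=
  Prf.mp (Prf.ax (Ax.contra Y (X.land Y)))
    (Prf.trans (Prf.imp1' Y.neg X) (Prf.dni (X.imp Y.neg)))

theorem Prf.landI (X Y : Fml) : Prf Ext (X.imp (Y.imp (X.land Y))) :=
  Prf.trans
    (Prf.trans (Prf.swap (Prf.compR X (Prf.ax (Ax.negE Y)))) (Prf.swapO (X.imp Y.neg) Y falsum))
    (Prf.compR Y (Prf.ax (Ax.negI (X.imp Y.neg))))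

end PrfLemmas

end PML

open PML PML.Fml in
theorem stmt8 (A B : Fml)
    (hA : QGL (A.imp A.box)) (hB : QGL (B.imp B.box))
    (h : QGL (A.box.imp (A.iff B))) : QGL (A.iff B) := by
  -- □A → (A→B) and □A → (B→A)
  have h1 : QGL (A.box.imp (A.imp B)) := Prf.trans h (Prf.landE1 _ _)
  have h2 : QGL (A.box.imp (B.imp A)) := Prf.trans h (Prf.landE2 _ _)
  -- A → B
  have hAB : QGL (A.imp B) := Prf.contract (Prf.trans hA h1)
  -- B → (□A → A)
  have lemB : QGL (B.imp (A.box.imp A)) := Prf.swap h2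
  -- □B → □(□A → A)
  have hb1 : QGL (B.box.imp ((A.box.imp A).box)) :=
    Prf.mp (Prf.ax (Ax.k B (A.box.imp A))) (Prf.nec lemB)
  -- Löb: □(□A→A) → □A, so □B → □A, so B → □A
  have hb2 : QGL (B.imp A.box) :=
    Prf.trans hB (Prf.trans hb1 (Prf.ext (AxL.lob A)))
  -- B → A
  have hBA : QGL (B.imp A) := Prf.contract (Prf.trans hb2 h2)
  exact Prf.mp (Prf.mp (Prf.landI _ _) hAB) hBA
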